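/- arXiv:math/9902115 — 3 statements merged into one kernel-verified Lean document; each statement's English description precedes it below -/
import Mathlib

section
/- Let m, c, r₀ > 0, let ℓ(r,x) = −m c² (√(1−x) + (r/r₀)² (1 + x/2)) and E(r,x) = 2x·ℓ_x(r,x) − ℓ(r,x). Then for all r ≥ 0 and 0 ≤ x < 1 one has ∂²E/∂x²(r,x) = (3 m c²/4)(1−x)^{−5/2} > 0; consequently, at every point (r,x) with r > 0, 0 ≤ x < 1, ∂E/∂x(r,x) = 0 and ℓ_x(r,x) ≠ 0, the partial derivative with respect to x of the product ℓ_x·E_x (the Hessian determinant of the Legendre map up to the positive factor 4/c⁴) is nonzero. -/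
/-!
Write `a = m c²` and `k = (r / r₀)²`. On `x < 1` every function in sight has the shape
`α (1 - x)^p + β x + γ`, a shape closed under differentiation:
`ℓ_x = (a/2)(1 - x)^(-1/2) - a k / 2`, and since `x (1 - x)^(-1/2) + (1 - x)^(1/2) = (1 - x)^(-1/2)`
the energy simplifies to `E = a (1 - x)^(-1/2) - (a k / 2) x + a k`. Differentiating twice gives
`E_xx = (3a/4)(1 - x)^(-5/2) > 0`, and at a zero of `E_x` the product rule leaves
`(ℓ_x E_x)_x = ℓ_x E_xx`, which is nonzero when `ℓ_x` is.
-/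

open Filter Topology

noncomputable def oneSubRpowAffine (α p β γ : ℝ) (y : ℝ) : ℝ := α * (1 - y) ^ p + β * y + γ

theorem hasDerivAt_oneSubRpowAffine (α p β γ : ℝ) {x : ℝ} (hx : x < 1) :
    HasDerivAt (oneSubRpowAffine α p β γ)
      (oneSubRpowAffine (-(α * p)) (p - 1) 0 β x) x := by
  have hpow : HasDerivAt (fun y : ℝ => (1 - y) ^ p) (-1 * p * (1 - x) ^ (p - 1)) x :=
    ((hasDerivAt_id x).const_sub 1).rpow_const (Or.inl (sub_ne_zero.2 hx.ne'))
  refine (((hpow.const_mul α).add ((hasDerivAt_id x).const_mul β)).add_const γ).congr_deriv ?_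
  simp only [oneSubRpowAffine]
  ring

theorem Filter.EventuallyEq.deriv_oneSubRpowAffine {f : ℝ → ℝ} {α p β γ x : ℝ}
    (hf : f =ᶠ[𝓝 x] oneSubRpowAffine α p β γ) (hx : x < 1) :
    deriv f =ᶠ[𝓝 x] oneSubRpowAffine (-(α * p)) (p - 1) 0 β := by
  filter_upwards [hf.deriv, Iio_mem_nhds hx] with y hy hy1
  rw [hy, (hasDerivAt_oneSubRpowAffine α p β γ hy1).deriv]

theorem Filter.EventuallyEq.hasDerivAt_oneSubRpowAffine {f : ℝ → ℝ} {α p β γ x : ℝ}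
    (hf : f =ᶠ[𝓝 x] oneSubRpowAffine α p β γ) (hx : x < 1) :
    HasDerivAt f (oneSubRpowAffine (-(α * p)) (p - 1) 0 β x) x :=
  (_root_.hasDerivAt_oneSubRpowAffine α p β γ hx).congr_of_eventuallyEq hf

section Oscillator

variable {m c r₀ : ℝ} {ℓ E : ℝ → ℝ → ℝ}

theorem oscillator_lagrangian_eq
    (hℓ : ∀ r x : ℝ,
      ℓ r x = -(m * c ^ 2) * (Real.sqrt (1 - x) + (r / r₀) ^ 2 * (1 + x / 2))) (r : ℝ) :
    ℓ r = oneSubRpowAffine (-(m * c ^ 2)) (1 / 2)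
      (-(m * c ^ 2 * (r / r₀) ^ 2 / 2)) (-(m * c ^ 2 * (r / r₀) ^ 2)) := by
  ext x
  rw [hℓ, oneSubRpowAffine, Real.sqrt_eq_rpow]
  ring

theorem oscillator_deriv_lagrangian_eventuallyEq
    (hℓ : ∀ r x : ℝ,
      ℓ r x = -(m * c ^ 2) * (Real.sqrt (1 - x) + (r / r₀) ^ 2 * (1 + x / 2))) (r : ℝ)
    {x : ℝ} (hx : x < 1) :
    deriv (ℓ r) =ᶠ[𝓝 x] oneSubRpowAffine (m * c ^ 2 / 2) (-(1 / 2)) 0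
      (-(m * c ^ 2 * (r / r₀) ^ 2 / 2)) := by
  convert (EventuallyEq.of_eq (oscillator_lagrangian_eq hℓ r)).deriv_oneSubRpowAffine hx
    using 2 <;> norm_num
  ring

theorem oscillator_energy_eventuallyEq
    (hℓ : ∀ r x : ℝ,
      ℓ r x = -(m * c ^ 2) * (Real.sqrt (1 - x) + (r / r₀) ^ 2 * (1 + x / 2)))
    (hE : ∀ r x : ℝ, E r x = 2 * x * deriv (ℓ r) x - ℓ r x) (r : ℝ) {x : ℝ} (hx : x < 1) :
    E r =ᶠ[𝓝 x] oneSubRpowAffine (m * c ^ 2) (-(1 / 2))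
      (-(m * c ^ 2 * (r / r₀) ^ 2 / 2)) (m * c ^ 2 * (r / r₀) ^ 2) := by
  filter_upwards [Iio_mem_nhds hx] with y hy
  have hy' : (0 : ℝ) < 1 - y := sub_pos.2 hy
  have hsqrt : (1 - y) ^ (1 / 2 : ℝ) = (1 - y) * (1 - y) ^ (-(1 / 2) : ℝ) := by
    rw [← Real.rpow_one_add' hy'.le (by norm_num)]
    norm_num
  rw [hE, (oscillator_deriv_lagrangian_eventuallyEq hℓ r hy).eq_of_nhds,
    oscillator_lagrangian_eq hℓ r]
  simp only [oneSubRpowAffine]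
  rw [hsqrt]
  ring

theorem oscillator_deriv_energy_eventuallyEq
    (hℓ : ∀ r x : ℝ,
      ℓ r x = -(m * c ^ 2) * (Real.sqrt (1 - x) + (r / r₀) ^ 2 * (1 + x / 2)))
    (hE : ∀ r x : ℝ, E r x = 2 * x * deriv (ℓ r) x - ℓ r x) (r : ℝ) {x : ℝ} (hx : x < 1) :
    deriv (E r) =ᶠ[𝓝 x] oneSubRpowAffine (m * c ^ 2 / 2) (-(3 / 2)) 0
      (-(m * c ^ 2 * (r / r₀) ^ 2 / 2)) ∧
    deriv (deriv (E r)) =ᶠ[𝓝 x] oneSubRpowAffine (3 * m * c ^ 2 / 4) (-(5 / 2)) 0 0 := by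
  have hE' : deriv (E r) =ᶠ[𝓝 x] oneSubRpowAffine (m * c ^ 2 / 2) (-(3 / 2)) 0
      (-(m * c ^ 2 * (r / r₀) ^ 2 / 2)) := by
    convert (oscillator_energy_eventuallyEq hℓ hE r hx).deriv_oneSubRpowAffine hx
      using 2 <;> norm_num
    ring
  refine ⟨hE', ?_⟩
  convert hE'.deriv_oneSubRpowAffine hx using 2 <;> norm_num
  ring

end Oscillator

theorem stmt_8_general (m c r₀ : ℝ) (hm : 0 < m) (hc : 0 < c)
    (ℓ : ℝ → ℝ → ℝ)
    (hℓ : ∀ r x : ℝ,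
      ℓ r x = -(m * c ^ 2) * (Real.sqrt (1 - x) + (r / r₀) ^ 2 * (1 + x / 2)))
    (E : ℝ → ℝ → ℝ)
    (hE : ∀ r x : ℝ, E r x = 2 * x * deriv (ℓ r) x - ℓ r x) :
    (∀ r x : ℝ, 0 ≤ r → 0 ≤ x → x < 1 →
      deriv (deriv (E r)) x = 3 * m * c ^ 2 / 4 * (1 - x) ^ (-(5 / 2 : ℝ)) ∧
      0 < deriv (deriv (E r)) x) ∧
    ∀ r x : ℝ, 0 < r → 0 ≤ x → x < 1 →
      deriv (E r) x = 0 → deriv (ℓ r) x ≠ 0 →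
      deriv (fun y => deriv (ℓ r) y * deriv (E r) y) x ≠ 0 := by
  have hE'' : ∀ r x : ℝ, x < 1 →
      deriv (deriv (E r)) x = 3 * m * c ^ 2 / 4 * (1 - x) ^ (-(5 / 2 : ℝ)) := by
    intro r x hx
    rw [(oscillator_deriv_energy_eventuallyEq hℓ hE r hx).2.eq_of_nhds, oneSubRpowAffine]
    ring
  have hE''_pos : ∀ r x : ℝ, x < 1 → 0 < deriv (deriv (E r)) x := fun r x hx => by
    rw [hE'' r x hx]
    have := Real.rpow_pos_of_pos (sub_pos.2 hx) (-(5 / 2))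
    positivity
  refine ⟨fun r x _ _ hx => ⟨hE'' r x hx, hE''_pos r x hx⟩, ?_⟩
  intro r x _ _ hx hEx hℓx
  have hE' := (oscillator_deriv_energy_eventuallyEq hℓ hE r hx).1
  have hℓ' := (oscillator_deriv_lagrangian_eventuallyEq hℓ r hx).hasDerivAt_oneSubRpowAffine hx
  have hprod : HasDerivAt (fun y => deriv (ℓ r) y * deriv (E r) y) _ x :=
    hℓ'.mul (hE'.hasDerivAt_oneSubRpowAffine hx)
  rw [hprod.deriv, hEx, ← (hE'.deriv_oneSubRpowAffine hx).eq_of_nhds, mul_zero, zero_add]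
  exact mul_ne_zero hℓx (hE''_pos r x hx).ne'

/-- For the post-Galilean oscillator, `∂²E/∂x² = (3mc²/4)(1−x)^{−5/2} > 0`; hence at
every point with `E_x = 0` and `ℓ_x ≠ 0` the `x`-derivative of the product `ℓ_x·E_x`
is nonzero. -/
theorem stmt_8 (m c r₀ : ℝ) (hm : 0 < m) (hc : 0 < c) (hr₀ : 0 < r₀)
    (ℓ : ℝ → ℝ → ℝ)
    (hℓ : ∀ r x : ℝ,
      ℓ r x = -(m * c ^ 2) * (Real.sqrt (1 - x) + (r / r₀) ^ 2 * (1 + x / 2)))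
    (E : ℝ → ℝ → ℝ)
    (hE : ∀ r x : ℝ, E r x = 2 * x * deriv (ℓ r) x - ℓ r x) :
    (∀ r x : ℝ, 0 ≤ r → 0 ≤ x → x < 1 →
      deriv (deriv (E r)) x = 3 * m * c ^ 2 / 4 * (1 - x) ^ (-(5 / 2 : ℝ)) ∧
      0 < deriv (deriv (E r)) x) ∧
    ∀ r x : ℝ, 0 < r → 0 ≤ x → x < 1 →
      deriv (E r) x = 0 → deriv (ℓ r) x ≠ 0 →
      deriv (fun y => deriv (ℓ r) y * deriv (E r) y) x ≠ 0 :=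
  stmt_8_general m c r₀ hm hc ℓ hℓ E hE
end

section
/- Let c > 0, let ℓ : ℝ × ℝ → ℝ be twice continuously differentiable, fix r ≥ 0 and v = (v₁,v₂) ∈ ℝ² with v ≠ 0, and set x = (v₁²+v₂²)/c². Let A be the 2×2 matrix with entries Aᵢⱼ = (2/c²) ℓ_x(r,x) δᵢⱼ + (4/c⁴) ℓ_xx(r,x) vᵢ vⱼ (the Hessian of w ↦ ℓ(r, ‖w‖²/c²) at v). If ℓ_x(r,x) + 2x·ℓ_xx(r,x) = 0 and ℓ_x(r,x) ≠ 0, then the kernel of A (as a linear map ℝ² → ℝ²) is exactly the line ℝ·v spanned by v. -/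
namespace Matrix

variable {K n : Type*} [Field K] [Fintype n] [DecidableEq n]

theorem smul_one_add_smul_vecMulVec_mulVec (a b : K) (v w : n → K) :
    (a • (1 : Matrix n n K) + b • vecMulVec v v) *ᵥ w = a • w + (b * (v ⬝ᵥ w)) • v := by
  rw [add_mulVec, smul_mulVec, smul_mulVec, one_mulVec, vecMulVec_mulVec, op_smul_eq_smul,
    smul_smul]

theorem smul_one_add_smul_vecMulVec_mulVec_eq_zero_iff {a b : K} {v : n → K} (ha : a ≠ 0)
    (hab : a + b * (v ⬝ᵥ v) = 0) (w : n → K) :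
    (a • (1 : Matrix n n K) + b • vecMulVec v v) *ᵥ w = 0 ↔ ∃ t : K, w = t • v := by
  rw [smul_one_add_smul_vecMulVec_mulVec]
  constructor
  · intro hw
    refine ⟨-(b * (v ⬝ᵥ w)) / a, ?_⟩
    have haw : a • w = (-(b * (v ⬝ᵥ w))) • v := by
      rw [neg_smul]
      exact eq_neg_of_add_eq_zero_left hw
    rw [div_eq_inv_mul, mul_smul, ← haw, inv_smul_smul₀ ha]
  · rintro ⟨t, rfl⟩
    rw [dotProduct_smul, smul_eq_mul, smul_smul, ← add_smul]
    convert zero_smul K v using 2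
    linear_combination t * hab

end Matrix

open Matrix in
theorem stmt_9_general (c : ℝ) (hc : 0 < c) (ℓ : ℝ → ℝ → ℝ)
    (r : ℝ) (v : Fin 2 → ℝ)
    (x : ℝ) (hx : x = (v 0 ^ 2 + v 1 ^ 2) / c ^ 2)
    (A : Matrix (Fin 2) (Fin 2) ℝ)
    (hA : ∀ i j : Fin 2,
      A i j = (2 / c ^ 2) * deriv (ℓ r) x * (if i = j then 1 else 0)
        + (4 / c ^ 4) * deriv (deriv (ℓ r)) x * v i * v j)
    (h1 : deriv (ℓ r) x + 2 * x * deriv (deriv (ℓ r)) x = 0)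
    (h2 : deriv (ℓ r) x ≠ 0) :
    ∀ w : Fin 2 → ℝ, A.mulVec w = 0 ↔ ∃ t : ℝ, w = t • v := by
  have hc0 : c ≠ 0 := hc.ne'
  have hA' : A = (2 / c ^ 2 * deriv (ℓ r) x) • (1 : Matrix (Fin 2) (Fin 2) ℝ)
      + (4 / c ^ 4 * deriv (deriv (ℓ r)) x) • vecMulVec v v := by
    ext i j
    simp only [hA, Matrix.add_apply, Matrix.smul_apply, Matrix.one_apply, vecMulVec_apply,
      smul_eq_mul]
    ring
  have hvv : v ⬝ᵥ v = c ^ 2 * x := by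
    rw [hx, mul_div_cancel₀ _ (pow_ne_zero 2 hc0)]
    simp [dotProduct, Fin.sum_univ_two, sq]
  rw [hA']
  refine smul_one_add_smul_vecMulVec_mulVec_eq_zero_iff (by positivity) ?_
  rw [hvv]
  field_simp
  linear_combination 2 * h1

/-- On `S₁ ∖ S₂` (i.e. `ℓ_x + 2x ℓ_xx = 0`, `ℓ_x ≠ 0`), the kernel of the Hessian
matrix `A` of the Legendre map is exactly the line spanned by the velocity `v`. -/
theorem stmt_9 (c : ℝ) (hc : 0 < c) (ℓ : ℝ → ℝ → ℝ)
    (hℓ : ContDiff ℝ 2 (fun p : ℝ × ℝ => ℓ p.1 p.2))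
    (r : ℝ) (hr : 0 ≤ r) (v : Fin 2 → ℝ) (hv : v ≠ 0)
    (x : ℝ) (hx : x = (v 0 ^ 2 + v 1 ^ 2) / c ^ 2)
    (A : Matrix (Fin 2) (Fin 2) ℝ)
    (hA : ∀ i j : Fin 2,
      A i j = (2 / c ^ 2) * deriv (ℓ r) x * (if i = j then 1 else 0)
        + (4 / c ^ 4) * deriv (deriv (ℓ r)) x * v i * v j)
    (h1 : deriv (ℓ r) x + 2 * x * deriv (deriv (ℓ r)) x = 0)
    (h2 : deriv (ℓ r) x ≠ 0) :
    ∀ w : Fin 2 → ℝ, A.mulVec w = 0 ↔ ∃ t : ℝ, w = t • v :=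
  stmt_9_general c hc ℓ r v x hx A hA h1 h2
end

section
/- Let p̄ = (p̄₁, p̄₂, p̄₃) ∈ ℝ³ with p̄₁² + p̄₂² > 0, let n̄ > 0, and suppose p̄₃² + (n̄² − 1)·(p̄₁² + p̄₂² + p̄₃²) ≥ 0. Let p̃₃ ≥ 0 satisfy p̃₃² = p̄₃² + (n̄² − 1)·(p̄₁² + p̄₂² + p̄₃²), and set p̃ = (p̄₁, p̄₂, p̃₃). Then ‖p̃‖ = n̄·‖p̄‖ and √(1 − p̄₃²/‖p̄‖²) = n̄·√(1 − p̃₃²/‖p̃‖²); that is, sin φ / sin ψ = n̄, where φ and ψ are the angles that p̄ and p̃ form with the q₃-axis (Snellius' law). -/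
/-!
Refraction keeps the tangential part `s = p̄₁² + p̄₂²` of the momentum, and the equation for `p̃₃`
says exactly that `s + p̃₃² = n̄² (s + p̄₃²)`. Since `1 - p₃²/(s + p₃²) = s/(s + p₃²)` is the squared
sine of the angle with the `q₃`-axis, both claims follow from this identity of squared norms.
-/

theorem add_sq_eq_sq_mul_of_sq_eq {s a b n : ℝ} (h : b ^ 2 = a ^ 2 + (n ^ 2 - 1) * (s + a ^ 2)) :
    s + b ^ 2 = n ^ 2 * (s + a ^ 2) := by
  rw [h]; ring

theorem one_sub_sq_div_add_sq {s a : ℝ} (h : s + a ^ 2 ≠ 0) :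
    1 - a ^ 2 / (s + a ^ 2) = s / (s + a ^ 2) := by
  field_simp; ring

theorem Real.sqrt_sq_mul {n x : ℝ} (hn : 0 ≤ n) : √(n ^ 2 * x) = n * √x := by
  rw [Real.sqrt_mul (sq_nonneg n), Real.sqrt_sq hn]

theorem stmt_16_general (p1 p2 p3 n pt3 : ℝ) (hp : 0 < p1 ^ 2 + p2 ^ 2) (hn : 0 < n)
    (hpt3sq : pt3 ^ 2 = p3 ^ 2 + (n ^ 2 - 1) * (p1 ^ 2 + p2 ^ 2 + p3 ^ 2)) :
    Real.sqrt (p1 ^ 2 + p2 ^ 2 + pt3 ^ 2) = n * Real.sqrt (p1 ^ 2 + p2 ^ 2 + p3 ^ 2) ∧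
    Real.sqrt (1 - p3 ^ 2 / (p1 ^ 2 + p2 ^ 2 + p3 ^ 2)) =
      n * Real.sqrt (1 - pt3 ^ 2 / (p1 ^ 2 + p2 ^ 2 + pt3 ^ 2)) := by
  have hnorm := add_sq_eq_sq_mul_of_sq_eq hpt3sq
  have hP : 0 < p1 ^ 2 + p2 ^ 2 + p3 ^ 2 := add_pos_of_pos_of_nonneg hp (sq_nonneg p3)
  have hPt : p1 ^ 2 + p2 ^ 2 + pt3 ^ 2 ≠ 0 := by rw [hnorm]; positivity
  refine ⟨by rw [hnorm, Real.sqrt_sq_mul hn.le], ?_⟩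
  rw [one_sub_sq_div_add_sq hP.ne', one_sub_sq_div_add_sq hPt, hnorm, mul_comm (n ^ 2), ← div_div,
    Real.sqrt_div' _ (sq_nonneg n), Real.sqrt_sq hn.le, mul_div_cancel₀ _ hn.ne']

/-- Snellius' law: the refracted momentum `p̃ = (p̄₁,p̄₂,p̃₃)` with
`p̃₃² = p̄₃² + (n̄²−1)‖p̄‖²` satisfies `‖p̃‖ = n̄‖p̄‖` and `sin φ = n̄ sin ψ`. -/
theorem stmt_16 (p1 p2 p3 n pt3 : ℝ) (hp : 0 < p1 ^ 2 + p2 ^ 2) (hn : 0 < n)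
    (hge : 0 ≤ p3 ^ 2 + (n ^ 2 - 1) * (p1 ^ 2 + p2 ^ 2 + p3 ^ 2))
    (hpt3 : 0 ≤ pt3)
    (hpt3sq : pt3 ^ 2 = p3 ^ 2 + (n ^ 2 - 1) * (p1 ^ 2 + p2 ^ 2 + p3 ^ 2)) :
    Real.sqrt (p1 ^ 2 + p2 ^ 2 + pt3 ^ 2) = n * Real.sqrt (p1 ^ 2 + p2 ^ 2 + p3 ^ 2) ∧
    Real.sqrt (1 - p3 ^ 2 / (p1 ^ 2 + p2 ^ 2 + p3 ^ 2)) =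
      n * Real.sqrt (1 - pt3 ^ 2 / (p1 ^ 2 + p2 ^ 2 + pt3 ^ 2)) :=
  stmt_16_general p1 p2 p3 n pt3 hp hn hpt3sq
end
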